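/- arXiv:1606.06417 — 10 statements merged into one kernel-verified Lean document; each statement's English description precedes it below -/
import Mathlib

section
/- Let S ⊆ A^A be a fully-transpositional function semigroup. If S contains a function f such that range(f) is finite and range(f) ≠ A, then S contains a constant function. -/
/-!
Among the members of `S` whose range lies inside `range f`, one of minimal range size is constant.
Indeed, let `g ∈ S` have finite range `R` with at least two points and some `a ∉ R`. If `g` is not
injective on `R`, then `g ∘ g` has range `g '' R ⊊ R`. If it is, then `g` permutes `R`; writing
`g a = g y` with `y ∈ R` and choosing `d ∈ R` other than `y`, the map `g ∘ swap a d ∘ g` has range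
inside `R` but misses `g d`.
-/

open Set

section

variable {A : Type*} [DecidableEq A] {S : Set (A → A)}

theorem exists_range_ssubset_of_nontrivial (hcomp : ∀ f ∈ S, ∀ g ∈ S, f ∘ g ∈ S)
    (hFT : ∀ a b : A, a ≠ b → ⇑(Equiv.swap a b) ∈ S) {f : A → A} (hf : f ∈ S)
    (hfin : (range f).Finite) {a : A} (ha : a ∉ range f) (hnt : (range f).Nontrivial) :
    ∃ g ∈ S, range g ⊂ range f := by
  have hmaps : MapsTo f (range f) (range f) := fun _ _ => mem_range_self _
  by_cases hinj : InjOn f (range f)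
  · obtain ⟨y, hyR, hy⟩ : ∃ y ∈ range f, f y = f a :=
      ((hfin.injOn_iff_bijOn_of_mapsTo hmaps).1 hinj).surjOn (mem_range_self a)
    obtain ⟨d, hdR, hdy⟩ := hnt.exists_ne y
    have had : a ≠ d := fun h => ha (h ▸ hdR)
    refine ⟨f ∘ Equiv.swap a d ∘ f, hcomp _ hf _ (hcomp _ (hFT a d had) f hf),
      ssubset_iff_subset_ne.2 ⟨range_comp_subset_range _ _, fun h => ?_⟩⟩
    obtain ⟨x, hx⟩ : f d ∈ range (f ∘ Equiv.swap a d ∘ f) := h ▸ mem_range_self d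
    by_cases hxd : f x = d
    · simp only [Function.comp_apply, hxd, Equiv.swap_apply_right] at hx
      exact hdy (hinj hdR hyR (hx ▸ hy).symm)
    · have hxa : f x ≠ a := fun h => ha (h ▸ mem_range_self x)
      simp only [Function.comp_apply, Equiv.swap_apply_of_ne_of_ne hxa hxd] at hx
      exact hxd (hinj (mem_range_self x) hdR hx)
  · refine ⟨f ∘ f, hcomp f hf f hf, ?_⟩
    rw [range_comp]
    refine ssubset_iff_subset_ne.2 ⟨hmaps.image_subset, fun h => hinj ?_⟩
    exact ((hfin.surjOn_iff_bijOn_of_mapsTo hmaps).1 h.symm.subset).injOn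

theorem exists_const_of_range_finite_ne_univ (hcomp : ∀ f ∈ S, ∀ g ∈ S, f ∘ g ∈ S)
    (hFT : ∀ a b : A, a ≠ b → ⇑(Equiv.swap a b) ∈ S) {f : A → A} (hf : f ∈ S)
    (hfin : (range f).Finite) (hrng : range f ≠ univ) :
    ∃ g ∈ S, ∃ c : A, ∀ x, g x = c := by
  obtain ⟨a, ha⟩ := (ne_univ_iff_exists_notMem _).1 hrng
  clear hrng
  induction h : (range f).ncard using Nat.strong_induction_on generalizing f with
  | _ n ih =>
    rcases (range f).subsingleton_or_nontrivial with hsub | hnt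
    · exact ⟨f, hf, f a, fun x => hsub (mem_range_self x) (mem_range_self a)⟩
    · obtain ⟨g, hg, hgf⟩ := exists_range_ssubset_of_nontrivial hcomp hFT hf hfin ha hnt
      exact ih _ (h ▸ ncard_lt_ncard hgf hfin) hg (hfin.subset hgf.subset)
        (fun ha' => ha (hgf.subset ha')) rfl

end

theorem stmt1_general {A : Type*} [DecidableEq A] (S : Set (A → A))
    (hcomp : ∀ f ∈ S, ∀ g ∈ S, f ∘ g ∈ S)
    (hFT : ∀ a b : A, a ≠ b → ⇑(Equiv.swap a b) ∈ S)
    (f : A → A) (hf : f ∈ S)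
    (hfin : (Set.range f).Finite) (hrng : Set.range f ≠ Set.univ) :
    ∃ g ∈ S, ∃ c : A, ∀ x, g x = c :=
  exists_const_of_range_finite_ne_univ hcomp hFT hf hfin hrng

theorem stmt1 {A : Type*} [DecidableEq A] (S : Set (A → A))
    (hne : S.Nonempty)
    (hcomp : ∀ f ∈ S, ∀ g ∈ S, f ∘ g ∈ S)
    (hFT : ∀ a b : A, a ≠ b → ⇑(Equiv.swap a b) ∈ S)
    (f : A → A) (hf : f ∈ S)
    (hfin : (Set.range f).Finite) (hrng : Set.range f ≠ Set.univ) :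
    ∃ g ∈ S, ∃ c : A, ∀ x, g x = c :=
  stmt1_general S hcomp hFT f hf hfin hrng
end

section
/- Let S ⊆ A^A be a fully-transpositional function semigroup with |A| ≥ 3, containing a semi-constant function that is not constant. Then for all a, d, p ∈ A with a ≠ p and d ≠ p, there exists a semi-constant g ∈ S with cnst(g) = a, d ∈ Cnst-dom(g), and p ∉ Cnst-dom(g). -/
/-!
Conjugating a semi-constant `h` with constant value `c` by a permutation `σ` gives a
semi-constant function with constant value `σ c` that sends `σ x` to `σ (h x)`, and `S` is
closed under conjugation by products of transpositions. As `h` is not constant, it sends some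
`b ≠ c` to `c` and fixes some `q ≠ c`. Products of transpositions can move any finitely many
points injectively anywhere (compose with one more transposition per point), so one of them
maps `c ↦ a`, `q ↦ p`, and `b ↦ d` unless `d = a` (a semi-constant `g` with constant value
`a` fixes `a` anyway), and the conjugate of `h` by it is the required `g`.
-/

/-- `f` is semi-constant with constant value `c`: there is a set `B` with at
least two elements on which `f` is constantly `c`, and `f` is the identity
outside `B`. -/
def SemiConstWith {A : Type*} (f : A → A) (c : A) : Prop :=
  ∃ B : Set A, B.Nontrivial ∧ (∀ x ∈ B, f x = c) ∧ ∀ x ∉ B, f x = x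

open Equiv Equiv.Perm

section
variable {A : Type*}

theorem SemiConstWith.apply_self {h : A → A} {c : A} (hc : SemiConstWith h c) : h c = c := by
  obtain ⟨B, -, hBc, hBid⟩ := hc
  by_cases hcB : c ∈ B
  exacts [hBc c hcB, hBid c hcB]

theorem SemiConstWith.conj {h : A → A} {c : A} (hc : SemiConstWith h c) (σ : Perm A) :
    SemiConstWith (⇑σ ∘ h ∘ ⇑σ⁻¹) (σ c) := by
  obtain ⟨B, hB, hBc, hBid⟩ := hc
  refine ⟨⇑σ⁻¹ ⁻¹' B, hB.preimage σ⁻¹.surjective, fun x hx => ?_, fun x hx => ?_⟩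
  · show σ (h (σ⁻¹ x)) = σ c
    rw [hBc _ hx]
  · show σ (h (σ⁻¹ x)) = x
    rw [hBid _ hx]
    exact σ.apply_symm_apply x

theorem SemiConstWith.exists_ne_apply_eq {h : A → A} {c : A} (hc : SemiConstWith h c)
    (hnc : ¬ ∃ c', ∀ x, h x = c') : ∃ b q, b ≠ c ∧ h b = c ∧ q ≠ c ∧ h q = q := by
  obtain ⟨B, hB, hBc, hBid⟩ := hc
  obtain ⟨b, hbB, hbc⟩ := hB.exists_ne c
  obtain ⟨q, hqc⟩ := not_forall.mp (not_exists.mp hnc c)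
  have hqB : q ∉ B := fun hqB => hqc (hBc q hqB)
  exact ⟨b, q, hbc, hBc b hbB, by rwa [hBid q hqB] at hqc, hBid q hqB⟩

variable [DecidableEq A]

theorem swap_mul_mem_mclosure_isSwap (x y : A) {σ : Perm A}
    (hσ : σ ∈ Submonoid.closure {τ : Perm A | τ.IsSwap}) :
    swap x y * σ ∈ Submonoid.closure {τ : Perm A | τ.IsSwap} := by
  rcases eq_or_ne x y with rfl | hxy
  · rwa [swap_self, ← Perm.one_def, one_mul]
  · exact mul_mem (Submonoid.subset_closure ⟨x, y, hxy, rfl⟩) hσ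

theorem exists_mem_mclosure_isSwap_eqOn (f : A → A) (s : Finset A) (hf : Set.InjOn f s) :
    ∃ σ ∈ Submonoid.closure {τ : Perm A | τ.IsSwap}, Set.EqOn σ f s := by
  induction s using Finset.induction_on with
  | empty => exact ⟨1, one_mem _, by simp⟩
  | insert x s hxs ih =>
    rw [Finset.coe_insert] at hf
    obtain ⟨σ, hσ, hσf⟩ := ih (hf.mono (Set.subset_insert _ _))
    refine ⟨swap (σ x) (f x) * σ, swap_mul_mem_mclosure_isSwap _ _ hσ, ?_⟩
    rw [Finset.coe_insert]
    rintro y (rfl | hy)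
    · exact swap_apply_left _ _
    have hyx : y ≠ x := fun h => hxs (h ▸ hy)
    rw [Perm.mul_apply, hσf hy]
    refine swap_apply_of_ne_of_ne (fun h => hyx (σ.injective ?_)) ?_
    · rw [hσf hy, h]
    · exact fun h => hyx (hf (Set.mem_insert_of_mem _ hy) (Set.mem_insert _ _) h)

theorem exists_mem_mclosure_isSwap_apply_eq₃ {a b c d p q : A} (hbc : b ≠ c) (hqc : q ≠ c)
    (hbq : b ≠ q) (hap : a ≠ p) (hdp : d ≠ p) :
    ∃ σ ∈ Submonoid.closure {τ : Perm A | τ.IsSwap}, σ c = a ∧ σ q = p ∧ (d ≠ a → σ b = d) := by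
  let f : A → A := fun x => if x = c then a else if x = q then p else d
  have hfc : f c = a := if_pos rfl
  have hfq : f q = p := by simp [f, hqc]
  have hfb : f b = d := by simp [f, hbc, hbq]
  have hf : ∀ s : Finset A, (∀ x ∈ s, x = c ∨ x = q ∨ x = b ∧ d ≠ a) → Set.InjOn f s := by
    intro s hs x hx y hy hxy
    rcases hs x hx with rfl | rfl | ⟨rfl, -⟩ <;> rcases hs y hy with rfl | rfl | ⟨rfl, -⟩ <;>
      grind
  by_cases hda : d = a
  · obtain ⟨σ, hσ, hσf⟩ := exists_mem_mclosure_isSwap_eqOn f {c, q} (hf _ (by simp))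
    exact ⟨σ, hσ, hfc ▸ hσf (by simp), hfq ▸ hσf (by simp), absurd hda⟩
  · obtain ⟨σ, hσ, hσf⟩ := exists_mem_mclosure_isSwap_eqOn f {c, q, b} (hf _ (by simp [hda]))
    exact ⟨σ, hσ, hfc ▸ hσf (by simp), hfq ▸ hσf (by simp), fun _ => hfb ▸ hσf (by simp)⟩

theorem conj_mem_of_mem_mclosure_isSwap {S : Set (A → A)}
    (hcomp : ∀ f ∈ S, ∀ g ∈ S, f ∘ g ∈ S)
    (hFT : ∀ a b : A, a ≠ b → ⇑(swap a b) ∈ S)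
    {σ : Perm A} (hσ : σ ∈ Submonoid.closure {τ : Perm A | τ.IsSwap}) {h : A → A} (hh : h ∈ S) :
    ⇑σ ∘ h ∘ ⇑σ⁻¹ ∈ S := by
  induction hσ using Submonoid.closure_induction generalizing h with
  | mem τ hτ =>
    obtain ⟨x, y, hxy, rfl⟩ := hτ
    rw [swap_inv]
    exact hcomp _ (hFT x y hxy) _ (hcomp _ hh _ (hFT x y hxy))
  | one => simpa using hh
  | mul τ ρ _ _ hτ hρ =>
    rw [mul_inv_rev, Perm.coe_mul, Perm.coe_mul]
    exact hτ (hρ hh)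

end

theorem stmt3_general {A : Type*} [DecidableEq A] (S : Set (A → A))
    (hcomp : ∀ f ∈ S, ∀ g ∈ S, f ∘ g ∈ S)
    (hFT : ∀ a b : A, a ≠ b → ⇑(Equiv.swap a b) ∈ S)
    (hsc : ∃ h ∈ S, (∃ c, SemiConstWith h c) ∧ ¬ ∃ c, ∀ x, h x = c)
    (a d p : A) (hap : a ≠ p) (hdp : d ≠ p) :
    ∃ g ∈ S, SemiConstWith g a ∧ g d = a ∧ g p ≠ a := by
  obtain ⟨h, hh, ⟨c, hc⟩, hnc⟩ := hsc
  obtain ⟨b, q, hbc, hb, hqc, hq⟩ := hc.exists_ne_apply_eq hnc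
  have hbq : b ≠ q := fun hbq => hqc (hq ▸ hbq ▸ hb)
  obtain ⟨σ, hσ, hσc, hσq, hσb⟩ := exists_mem_mclosure_isSwap_apply_eq₃ hbc hqc hbq hap hdp
  have hg := hσc ▸ hc.conj σ
  refine ⟨⇑σ ∘ h ∘ ⇑σ⁻¹, conj_mem_of_mem_mclosure_isSwap hcomp hFT hσ hh, hg, ?_, ?_⟩
  · rcases eq_or_ne d a with rfl | hda
    · exact hg.apply_self
    · simp [← hσb hda, hb, hσc]
  · simpa [← hσq, hq] using hap.symm

theorem stmt3 {A : Type*} [DecidableEq A] (S : Set (A → A))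
    (hne : S.Nonempty)
    (hcomp : ∀ f ∈ S, ∀ g ∈ S, f ∘ g ∈ S)
    (hFT : ∀ a b : A, a ≠ b → ⇑(Equiv.swap a b) ∈ S)
    (hcard : ∃ x y z : A, x ≠ y ∧ x ≠ z ∧ y ≠ z)
    (hsc : ∃ h ∈ S, (∃ c, SemiConstWith h c) ∧ ¬ ∃ c, ∀ x, h x = c)
    (a d p : A) (hap : a ≠ p) (hdp : d ≠ p) :
    ∃ g ∈ S, SemiConstWith g a ∧ g d = a ∧ g p ≠ a :=
  stmt3_general S hcomp hFT hsc a d p hap hdp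
end

section
/- Let S ⊆ A^A be a fully-transpositional function semigroup, f ∈ S a semi-constant function that is not constant, and b ∈ A. Then b = cnst(f) if and only if (i) |[b]_f| ≥ 2 and (ii) for every a ∈ A \ [b]_f, (f ∘ ⟨a b⟩)³ = f ∘ ⟨a b⟩, where ⟨a b⟩ denotes the transposition swapping a and b and [b]_f = {x ∈ A : f(x) = f(b)}. -/
theorem Function.comp_comp_self_of_swap_or_fixed {A : Type*} {g : A → A} {a c : A}
    (hga : g a = c) (hgc : g c = a) (hg : ∀ x, g x = a ∨ g x = c ∨ g x = x) :
    g ∘ g ∘ g = g := by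
  funext x
  rcases hg x with h | h | h <;> simp only [Function.comp_apply, h, hga, hgc]

namespace SemiConstWith

variable {A : Type*} {f : A → A} {c : A}

theorem apply_eq_or_eq (hf : SemiConstWith f c) (x : A) : f x = c ∨ f x = x := by
  obtain ⟨B, -, hB, hBc⟩ := hf
  by_cases hx : x ∈ B
  · exact .inl (hB x hx)
  · exact .inr (hBc x hx)

theorem apply_self_s4 (hf : SemiConstWith f c) : f c = c :=
  (hf.apply_eq_or_eq c).elim id id

theorem setOf_apply_eq_nontrivial (hf : SemiConstWith f c) : {x | f x = f c}.Nontrivial := by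
  obtain ⟨B, hB, hBc, -⟩ := id hf
  exact hB.mono fun x hx => (hBc x hx).trans hf.apply_self_s4.symm

theorem setOf_apply_eq_subsingleton {b : A} (hf : SemiConstWith f c) (hfb : f b = b)
    (hbc : b ≠ c) : {x | f x = f b}.Subsingleton := by
  suffices h : ∀ x, f x = b → x = b by
    rw [hfb]
    exact fun x hx y hy => (h x hx).trans (h y hy).symm
  intro x hx
  rcases hf.apply_eq_or_eq x with h | h
  · exact absurd (hx.symm.trans h) hbc
  · exact h.symm.trans hx

variable [DecidableEq A]

theorem comp_swap_cube {a : A} (hf : SemiConstWith f c) (ha : f a ≠ f c) :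
    (f ∘ Equiv.swap a c) ∘ (f ∘ Equiv.swap a c) ∘ (f ∘ Equiv.swap a c) =
      f ∘ Equiv.swap a c := by
  rw [hf.apply_self_s4] at ha
  have hfa : f a = a := (hf.apply_eq_or_eq a).resolve_left ha
  refine Function.comp_comp_self_of_swap_or_fixed (a := a) (c := c) ?_ ?_ fun x => ?_
  · simp [hf.apply_self_s4]
  · simp [hfa]
  · by_cases hxa : x = a
    · simp [hxa, hf.apply_self_s4]
    by_cases hxc : x = c
    · simp [hxc, hfa]
    simp only [Function.comp_apply, Equiv.swap_apply_of_ne_of_ne hxa hxc]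
    rcases hf.apply_eq_or_eq x with h | h <;> simp [h]

theorem comp_swap_cube_ne {a b : A} (hf : SemiConstWith f c) (hfb : f b = c) (hbc : b ≠ c)
    (ha : f a ≠ c) :
    (f ∘ Equiv.swap a b) ∘ (f ∘ Equiv.swap a b) ∘ (f ∘ Equiv.swap a b) ≠
      f ∘ Equiv.swap a b := by
  have hfa : f a = a := (hf.apply_eq_or_eq a).resolve_left ha
  have hac : a ≠ c := fun h => ha (h ▸ hfa)
  intro hg
  have hgb := congrFun hg b
  simp only [Function.comp_apply, Equiv.swap_apply_right, hfa, Equiv.swap_apply_left, hfb,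
    Equiv.swap_apply_of_ne_of_ne hac.symm hbc.symm, hf.apply_self_s4] at hgb
  exact hac hgb.symm

end SemiConstWith

theorem stmt4_general {A : Type*} [DecidableEq A]
    (f : A → A)
    (hsc : ∃ c, SemiConstWith f c) (hnc : ¬ ∃ c, ∀ x, f x = c) (b : A) :
    SemiConstWith f b ↔
      ({x : A | f x = f b}.Nontrivial ∧
        ∀ a : A, f a ≠ f b →
          (f ∘ ⇑(Equiv.swap a b)) ∘ (f ∘ ⇑(Equiv.swap a b)) ∘ (f ∘ ⇑(Equiv.swap a b)) =
            f ∘ ⇑(Equiv.swap a b)) := by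
  refine ⟨fun hb => ⟨hb.setOf_apply_eq_nontrivial, fun a ha => hb.comp_swap_cube ha⟩, ?_⟩
  rintro ⟨hnt, hcube⟩
  obtain ⟨c, hc⟩ := hsc
  obtain rfl | hbc := eq_or_ne b c
  · exact hc
  rcases hc.apply_eq_or_eq b with hfb | hfb
  · obtain ⟨a, ha⟩ : ∃ a, f a ≠ c := not_forall.mp fun h => hnc ⟨c, h⟩
    exact absurd (hcube a (hfb ▸ ha)) (hc.comp_swap_cube_ne hfb hbc ha)
  · exact absurd hnt (hc.setOf_apply_eq_subsingleton hfb hbc).not_nontrivial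

theorem stmt4 {A : Type*} [DecidableEq A] (S : Set (A → A))
    (hne : S.Nonempty)
    (hcomp : ∀ f ∈ S, ∀ g ∈ S, f ∘ g ∈ S)
    (hFT : ∀ a b : A, a ≠ b → ⇑(Equiv.swap a b) ∈ S)
    (f : A → A) (hf : f ∈ S)
    (hsc : ∃ c, SemiConstWith f c) (hnc : ¬ ∃ c, ∀ x, f x = c) (b : A) :
    SemiConstWith f b ↔
      ({x : A | f x = f b}.Nontrivial ∧
        ∀ a : A, f a ≠ f b →
          (f ∘ ⇑(Equiv.swap a b)) ∘ (f ∘ ⇑(Equiv.swap a b)) ∘ (f ∘ ⇑(Equiv.swap a b)) =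
            f ∘ ⇑(Equiv.swap a b)) :=
  stmt4_general f hsc hnc b
end

section
/- Let S be a fully-transpositional semigroup on A which contains a semi-constant function but no constant function, let f ∈ S and b ∈ A with f(b) a fixed point of f. Then there exists a ∈ [b]_f such that for every semi-constant g ∈ S with [a]_g = {a} and cnst(g) ∉ [b]_f, we have [b]_{f∘g∘f} ⊆ [b]_{f²}. -/
namespace SemiConstWith

variable {A : Type*} {g : A → A} {c : A}

theorem apply_eq_or_apply_eq_self (hg : SemiConstWith g c) (x : A) : g x = c ∨ g x = x := by
  obtain ⟨B, -, hBc, hBid⟩ := hg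
  by_cases hx : x ∈ B
  · exact Or.inl (hBc x hx)
  · exact Or.inr (hBid x hx)

theorem apply_eq_self_of_fiber_eq_singleton (hg : SemiConstWith g c) {a : A}
    (ha : ∀ x, g x = g a → x = a) : g a = a := by
  obtain ⟨B, ⟨y, hy, z, hz, hyz⟩, hBc, hBid⟩ := hg
  refine hBid a fun haB => hyz ?_
  rw [ha y (by rw [hBc y hy, hBc a haB]), ha z (by rw [hBc z hz, hBc a haB])]

end SemiConstWith

theorem stmt5_general {A : Type*} (S : Set (A → A))
    (f : A → A) (b : A) (hb : f (f b) = f b) :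
    ∃ a : A, f a = f b ∧
      ∀ g ∈ S, (∃ c, SemiConstWith g c) →
        (∀ x, g x = g a → x = a) →
        (∀ c, SemiConstWith g c → f c ≠ f b) →
        ∀ x, f (g (f x)) = f (g (f b)) → f (f x) = f (f b) := by
  refine ⟨f b, hb, ?_⟩
  rintro g - ⟨c, hgc⟩ hfiber hcnst x hx
  rw [hgc.apply_eq_self_of_fiber_eq_singleton hfiber, hb] at hx
  rw [hb]
  rcases hgc.apply_eq_or_apply_eq_self (f x) with hgx | hgx
  · exact absurd (hgx ▸ hx) (hcnst c hgc)
  · rwa [hgx] at hx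

theorem stmt5 {A : Type*} [DecidableEq A] (S : Set (A → A))
    (hne : S.Nonempty)
    (hcomp : ∀ f ∈ S, ∀ g ∈ S, f ∘ g ∈ S)
    (hFT : ∀ a b : A, a ≠ b → ⇑(Equiv.swap a b) ∈ S)
    (hsc : ∃ h ∈ S, ∃ c, SemiConstWith h c)
    (hnoconst : ∀ h ∈ S, ¬ ∃ c, ∀ x, h x = c)
    (f : A → A) (hf : f ∈ S) (b : A) (hb : f (f b) = f b) :
    ∃ a : A, f a = f b ∧
      ∀ g ∈ S, (∃ c, SemiConstWith g c) →
        (∀ x, g x = g a → x = a) →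
        (∀ c, SemiConstWith g c → f c ≠ f b) →
        ∀ x, f (g (f x)) = f (g (f b)) → f (f x) = f (f b) :=
  stmt5_general S f b hb
end

section
/- Let S ⊆ A^A be a fully-transpositional function semigroup. If S contains a function f such that f[A \ Idp(f)] is finite and f is not injective, then S contains a semi-constant function, where Idp(f) = {a ∈ A : f⁻¹[{a}] = {a}}. -/
open Function Set

theorem exists_isIdempotentElem_pow_of_pow_eq_pow {M : Type*} [Monoid M] {a : M} {i j : ℕ}
    (hij : i < j) (h : a ^ i = a ^ j) : ∃ n ≠ 0, IsIdempotentElem (a ^ n) := by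
  set p := j - i
  have hperiod : ∀ k, i ≤ k → ∀ m, a ^ (k + m * p) = a ^ k := by
    intro k hk m
    induction m with
    | zero => simp
    | succ m ih =>
      calc a ^ (k + (m + 1) * p) = a ^ (k - i) * a ^ (i + p) * a ^ (m * p) := by
            rw [← pow_add, ← pow_add]; congr 1; rw [add_one_mul]; omega
        _ = a ^ (k + m * p) := by
            rw [show i + p = j by omega, ← h, ← pow_add, ← pow_add]; congr 1; omega
        _ = a ^ k := ih
  have hp : 0 < p := by omega
  refine ⟨j * p, (Nat.mul_pos (by omega) hp).ne', ?_⟩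
  rw [IsIdempotentElem, ← pow_add, hperiod _ (le_mul_of_le_of_one_le hij.le hp)]

section

variable {α : Type*}

def movedImage (f : α → α) : Set α := f '' {x | f x ≠ x}

theorem apply_mem_movedImage {f : α → α} {x : α} (hx : f x ≠ x) : f x ∈ movedImage f :=
  mem_image_of_mem f hx

theorem mapsTo_movedImage (f : α → α) : MapsTo f (movedImage f) (movedImage f) := by
  intro x hx
  by_cases hfx : f x = x
  · rwa [hfx]
  · exact apply_mem_movedImage hfx

theorem movedImage_iterate_subset (f : α → α) (n : ℕ) : movedImage f^[n] ⊆ movedImage f := by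
  rintro _ ⟨x, hx, rfl⟩
  cases n with
  | zero => exact absurd rfl hx
  | succ n =>
    have hfx : f x ≠ x := fun hfx => hx (iterate_fixed hfx _)
    rw [iterate_succ_apply]
    exact (mapsTo_movedImage f).iterate n (apply_mem_movedImage hfx)

theorem movedImage_subset_image_setOf_preimage_ne (f : α → α) :
    movedImage f ⊆ f '' {a | f ⁻¹' {a} ≠ {a}} := by
  refine image_mono fun x hx hpre => hx ?_
  exact (hpre.symm ▸ mem_singleton x : x ∈ f ⁻¹' {x})

theorem exists_lt_iterate_eq_of_finite_movedImage {f : α → α} (hf : (movedImage f).Finite) :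
    ∃ i j, i < j ∧ f^[i] = f^[j] := by
  have hmaps := mapsTo_movedImage f
  have := hf.to_subtype
  obtain ⟨i, j, hij, hrestrict⟩ := finite_univ.exists_lt_map_eq_of_forall_mem
    (f := fun k : ℕ => hmaps.restrict^[k]) fun _ => mem_univ _
  refine ⟨i + 1, j + 1, by omega, funext fun x => ?_⟩
  rw [iterate_succ_apply, iterate_succ_apply]
  by_cases hx : f x = x
  · rw [hx, iterate_fixed hx, iterate_fixed hx]
  · have := congrArg Subtype.val (congrFun hrestrict ⟨f x, apply_mem_movedImage hx⟩)
    simpa only [MapsTo.coe_iterate_restrict] using this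

theorem exists_iterate_idempotent_of_finite_movedImage {f : α → α}
    (hf : (movedImage f).Finite) : ∃ n ≠ 0, ∀ x, f^[n] (f^[n] x) = f^[n] x := by
  obtain ⟨i, j, hij, heq⟩ := exists_lt_iterate_eq_of_finite_movedImage hf
  obtain ⟨n, hn, hidem⟩ :=
    exists_isIdempotentElem_pow_of_pow_eq_pow (M := Function.End α) (a := f) hij heq
  exact ⟨n, hn, congrFun hidem⟩

theorem semiConstWith_of_forall_moved_apply_eq {h : α → α} (hh : ∀ x, h (h x) = h x) {b : α}
    (hb : h b ≠ b) (hconst : ∀ x, h x ≠ x → h x = h b) : SemiConstWith h (h b) := by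
  refine ⟨{x | h x ≠ x} ∪ {h b}, ⟨b, .inl hb, h b, .inr rfl, hb.symm⟩, ?_, ?_⟩
  · rintro x (hx | rfl)
    · exact hconst x hx
    · exact hh b
  · intro x hx
    by_contra hmoved
    exact hx (.inl hmoved)

section Redirect

variable [DecidableEq α] {h : α → α}

theorem comp_swap_comp_eq_update_comp (hh : ∀ x, h (h x) = h x) (a : α) {b : α} (hb : h b ≠ b) :
    h ∘ Equiv.swap (h a) b ∘ h = update id (h a) (h b) ∘ h := by
  funext x
  by_cases hxa : h x = h a
  · simp [hxa]
  · have hxb : h x ≠ b := fun hxb => hb (hxb ▸ hh x)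
    simp [hxa, Equiv.swap_apply_of_ne_of_ne hxa hxb, hh x]

theorem update_comp_idempotent (hh : ∀ x, h (h x) = h x) {v w : α} (hw : h w = w) (hvw : w ≠ v) :
    ∀ x, (update id v w ∘ h) ((update id v w ∘ h) x) = (update id v w ∘ h) x := by
  intro x
  by_cases hxv : h x = v
  · simp [hxv, hw, hvw]
  · simp [hxv, hh x]

theorem movedImage_update_comp_subset {v w : α} (hw : w ∈ movedImage h) (hvw : w ≠ v) :
    movedImage (update id v w ∘ h) ⊆ movedImage h \ {v} := by
  rintro _ ⟨x, hx, rfl⟩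
  by_cases hxv : h x = v
  · simpa [hxv] using ⟨hw, hvw⟩
  · have hx' : h x ≠ x := by simpa [hxv] using hx
    simpa [hxv] using apply_mem_movedImage hx'

end Redirect

theorem exists_semiConstWith_of_idempotent [DecidableEq α] {S : Set (α → α)}
    (hcomp : ∀ f ∈ S, ∀ g ∈ S, f ∘ g ∈ S)
    (hswap : ∀ a b : α, a ≠ b → ⇑(Equiv.swap a b) ∈ S)
    {h : α → α} (hS : h ∈ S) (hh : ∀ x, h (h x) = h x) (hmoved : ∃ x, h x ≠ x)
    (hfin : (movedImage h).Finite) : ∃ g ∈ S, ∃ c, SemiConstWith g c := by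
  induction hn : (movedImage h).ncard using Nat.strong_induction_on generalizing h with
  | _ n ih =>
  obtain ⟨b, hb⟩ := hmoved
  by_cases hconst : ∀ x, h x ≠ x → h x = h b
  · exact ⟨h, hS, h b, semiConstWith_of_forall_moved_apply_eq hh hb hconst⟩
  push Not at hconst
  obtain ⟨a, ha, hab⟩ := hconst
  have hba : b ≠ h a := fun hba => hb (hba ▸ hh a)
  have hgS : update id (h a) (h b) ∘ h ∈ S := by
    rw [← comp_swap_comp_eq_update_comp hh a hb]
    exact hcomp h hS _ (hcomp _ (hswap _ _ hba.symm) h hS)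
  have hsub := movedImage_update_comp_subset (apply_mem_movedImage hb) (Ne.symm hab)
  refine ih _ ?_ hgS (update_comp_idempotent hh (hh b) (Ne.symm hab))
    ⟨h a, by simpa [hh a] using Ne.symm hab⟩ (hfin.subset (hsub.trans sdiff_subset)) rfl
  calc (movedImage (update id (h a) (h b) ∘ h)).ncard
      ≤ (movedImage h \ {h a}).ncard := ncard_le_ncard hsub (hfin.sdiff)
    _ < n := hn ▸ ncard_sdiff_singleton_lt_of_mem (apply_mem_movedImage ha) hfin

theorem iterate_succ_mem_of_comp_mem {S : Set (α → α)} (hcomp : ∀ f ∈ S, ∀ g ∈ S, f ∘ g ∈ S)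
    {f : α → α} (hf : f ∈ S) (n : ℕ) : f^[n + 1] ∈ S := by
  induction n with
  | zero => exact hf
  | succ n ih => exact iterate_succ' f (n + 1) ▸ hcomp f hf _ ih

end

theorem stmt7_general {A : Type*} [DecidableEq A] (S : Set (A → A))
    (hcomp : ∀ f ∈ S, ∀ g ∈ S, f ∘ g ∈ S)
    (hFT : ∀ a b : A, a ≠ b → ⇑(Equiv.swap a b) ∈ S)
    (f : A → A) (hf : f ∈ S)
    (hfin : (f '' {a : A | f ⁻¹' {a} ≠ {a}}).Finite)
    (hinj : ¬ Function.Injective f) :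
    ∃ g ∈ S, ∃ c, SemiConstWith g c := by
  have hM : (movedImage f).Finite := hfin.subset (movedImage_subset_image_setOf_preimage_ne f)
  obtain ⟨n, hn, hidem⟩ := exists_iterate_idempotent_of_finite_movedImage hM
  obtain ⟨m, rfl⟩ := Nat.exists_eq_succ_of_ne_zero hn
  have hmoved : ∃ x, f^[m + 1] x ≠ x := by
    by_contra! hid
    refine hinj (Injective.of_comp (f := f^[m]) ?_)
    rw [← iterate_succ, funext hid]
    exact injective_id
  exact exists_semiConstWith_of_idempotent hcomp hFT (iterate_succ_mem_of_comp_mem hcomp hf m)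
    hidem hmoved (hM.subset (movedImage_iterate_subset f _))

theorem stmt7 {A : Type*} [DecidableEq A] (S : Set (A → A))
    (hne : S.Nonempty)
    (hcomp : ∀ f ∈ S, ∀ g ∈ S, f ∘ g ∈ S)
    (hFT : ∀ a b : A, a ≠ b → ⇑(Equiv.swap a b) ∈ S)
    (f : A → A) (hf : f ∈ S)
    (hfin : (f '' {a : A | f ⁻¹' {a} ≠ {a}}).Finite)
    (hinj : ¬ Function.Injective f) :
    ∃ g ∈ S, ∃ c, SemiConstWith g c :=
  stmt7_general S hcomp hFT f hf hfin hinj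
end

section
/- Let f : A → A, let (b, a, c) be an f-long triple (f(b) = a, f(a) = c, b ≠ a, a ≠ c) and let (r, q, s, t) be an f-long-wide quadruple (f(q) = f(s) = t with q, s, t pairwise distinct, and f(r) = s) with t ≠ a and t ≠ c. Then there exists a transposition π = ⟨x y⟩ with x, y ∉ [b]_f such that [b]_{f∘π∘f} ≠ [b]_{f²}. -/
/-! Take π = ⟨a q⟩. Since f(r) = s is fixed by π, both f(π(f r)) = f(s) and f(π(f b)) = f(q)
equal t, so r lies in [b]_{f∘π∘f}; but f²(r) = t ≠ c = f²(b), so r ∉ [b]_{f²}. -/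

theorem stmt8_general {A : Type*} [DecidableEq A] (f : A → A) (b a c r q s t : A)
    (h1 : f b = a) (h2 : f a = c) (h4 : a ≠ c)
    (h5 : f q = t) (h6 : f s = t) (h7 : q ≠ s)
    (h10 : f r = s) (h11 : t ≠ a) (h12 : t ≠ c) :
    ∃ x y : A, x ≠ y ∧ f x ≠ f b ∧ f y ≠ f b ∧
      {z : A | f (Equiv.swap x y (f z)) = f (Equiv.swap x y (f b))} ≠
        {z : A | f (f z) = f (f b)} := by
  have haq : a ≠ q := fun h => h12 (by rw [← h5, ← h, h2])
  have hsa : s ≠ a := fun h => h12 (by rw [← h6, h, h2])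
  refine ⟨a, q, haq, by rw [h1, h2]; exact h4.symm, by rw [h1, h5]; exact h11, fun hset => ?_⟩
  have hr_swap : f (Equiv.swap a q (f r)) = f (Equiv.swap a q (f b)) := by
    rw [h10, h1, Equiv.swap_apply_left, Equiv.swap_apply_of_ne_of_ne hsa h7.symm, h6, h5]
  have hr_sq : f (f r) = f (f b) := by
    have hr : r ∈ {z : A | f (Equiv.swap a q (f z)) = f (Equiv.swap a q (f b))} := hr_swap
    rwa [hset] at hr
  rw [h10, h6, h1, h2] at hr_sq
  exact h12 hr_sq

theorem stmt8 {A : Type*} [DecidableEq A] (f : A → A) (b a c r q s t : A)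
    (h1 : f b = a) (h2 : f a = c) (h3 : b ≠ a) (h4 : a ≠ c)
    (h5 : f q = t) (h6 : f s = t) (h7 : q ≠ s) (h8 : q ≠ t) (h9 : s ≠ t)
    (h10 : f r = s) (h11 : t ≠ a) (h12 : t ≠ c) :
    ∃ x y : A, x ≠ y ∧ f x ≠ f b ∧ f y ≠ f b ∧
      {z : A | f (Equiv.swap x y (f z)) = f (Equiv.swap x y (f b))} ≠
        {z : A | f (f z) = f (f b)} :=
  stmt8_general f b a c r q s t h1 h2 h4 h5 h6 h7 h10 h11 h12
end

section
/- Let S be a fully-transpositional semigroup on A containing no semi-constant function, and let f ∈ S with |B(f)| ≤ 2, where B(f) is the set of ~_f-classes of size ≥ 2. Then either f is a bijection of A moving only finitely many points (in which case f and f⁻¹ are in S), or the set A \ (Mo-pre(f) ∪ Idp(f)) is infinite, where Mo-pre(f) = ∪B(f) and Idp(f) = {a : f⁻¹[{a}] = {a}}. -/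
open Function Set Equiv Nat

section TranspositionalSemigroup

variable {A : Type*}

def IsSupportedIn (W : Set A) (g : A → A) : Prop :=
  MapsTo g W W ∧ ∀ x ∉ W, g x = x

namespace IsSupportedIn

variable {W : Set A} {f g : A → A}

theorem comp (hf : IsSupportedIn W f) (hg : IsSupportedIn W g) : IsSupportedIn W (f ∘ g) :=
  ⟨hf.1.comp hg.1, fun x hx => by rw [comp_apply, hg.2 x hx, hf.2 x hx]⟩

theorem mem_of_apply_eq_apply (hf : IsSupportedIn W f) {a b : A} (hab : a ≠ b)
    (hfab : f a = f b) : a ∈ W := by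
  by_contra ha
  by_cases hb : b ∈ W
  · exact ha (hf.2 a ha ▸ hfab ▸ hf.1 hb)
  · exact hab (by rw [← hf.2 a ha, ← hf.2 b hb, hfab])

end IsSupportedIn

theorem isSupportedIn_swap [DecidableEq A] {W : Set A} {a b : A} (ha : a ∈ W) (hb : b ∈ W) :
    IsSupportedIn W (swap a b) := by
  refine ⟨fun z hz => ?_, fun x hx => swap_apply_of_ne_of_ne (ne_of_mem_of_not_mem ha hx).symm
    (ne_of_mem_of_not_mem hb hx).symm⟩
  rcases eq_or_ne z a with rfl | hza
  · rwa [swap_apply_left]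
  rcases eq_or_ne z b with rfl | hzb
  · rwa [swap_apply_right]
  rwa [swap_apply_of_ne_of_ne hza hzb]

theorem isSupportedIn_setOf_preimage_singleton_ne (f : A → A) :
    IsSupportedIn {x | f ⁻¹' {x} ≠ {x}} f := by
  have fixed : ∀ x, f ⁻¹' {x} = {x} → f x = x := fun x hx =>
    (hx.symm ▸ mem_singleton x : x ∈ f ⁻¹' {x})
  refine ⟨fun z hz hfz => hz ?_, fun x hx => fixed x (not_not.1 hx)⟩
  have hzfz : z ∈ f ⁻¹' {f z} := rfl
  rw [hfz, mem_singleton_iff] at hzfz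
  rwa [← hzfz] at hfz

theorem exists_semiConstWith_of_subsingleton_image {W : Set A} {g : A → A}
    (hg : ∀ x ∉ W, g x = x) (hW : W.Nontrivial) (hsub : (g '' W).Subsingleton) :
    ∃ c, SemiConstWith g c := by
  obtain ⟨a, ha⟩ := hW.nonempty
  exact ⟨g a, W, hW, fun x hx => hsub (mem_image_of_mem g hx) (mem_image_of_mem g ha), hg⟩

theorem Set.finite_of_forall_eq_or_eq_or_eq {s : Set A}
    (h : ∀ p ∈ s, ∀ q ∈ s, ∀ r ∈ s, p = q ∨ p = r ∨ q = r) : s.Finite := by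
  by_contra hs
  obtain ⟨t, hts, ht⟩ := Infinite.exists_subset_ncard_eq hs 3
  obtain ⟨p, q, r, hpq, hpr, hqr, rfl⟩ := ncard_eq_three.1 ht.2
  rcases h p (hts (by simp)) q (hts (by simp)) r (hts (by simp)) with h | h | h <;> contradiction

theorem finite_image_setOf_nontrivial_fiber {f : A → A}
    (hB : ∀ a b c : A, {x | f x = f a}.Nontrivial → {x | f x = f b}.Nontrivial →
      {x | f x = f c}.Nontrivial →
      {x | f x = f a} = {x | f x = f b} ∨ {x | f x = f a} = {x | f x = f c} ∨
        {x | f x = f b} = {x | f x = f c}) :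
    (f '' {x | {y | f y = f x}.Nontrivial}).Finite := by
  refine Set.finite_of_forall_eq_or_eq_or_eq ?_
  rintro _ ⟨p, hp, rfl⟩ _ ⟨q, hq, rfl⟩ _ ⟨r, hr, rfl⟩
  have apply_eq : ∀ {u v : A}, {y | f y = f u} = {y | f y = f v} → f u = f v :=
    fun h => (Set.ext_iff.1 h _).1 rfl
  exact (hB p q r hp hq hr).imp apply_eq (Or.imp apply_eq apply_eq)

section SwapClosed

variable [DecidableEq A] {S : Set (A → A)}

theorem swap_comp_mem (hcomp : ∀ f ∈ S, ∀ g ∈ S, f ∘ g ∈ S)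
    (hFT : ∀ a b : A, a ≠ b → ⇑(swap a b) ∈ S) {g : A → A} (hg : g ∈ S) (a b : A) :
    ⇑(Equiv.swap a b) ∘ g ∈ S := by
  rcases eq_or_ne a b with rfl | hab
  · simpa only [swap_self, coe_refl, id_comp] using hg
  · exact hcomp _ (hFT a b hab) g hg

/-- The reduction step: `f ∘ π ∘ g`, with `π` sending `x, y` to `a, b`, merges `x` and `y`. -/
theorem exists_ncard_image_lt (hcomp : ∀ f ∈ S, ∀ g ∈ S, f ∘ g ∈ S)
    (hFT : ∀ a b : A, a ≠ b → ⇑(swap a b) ∈ S) {W : Set A} {f g : A → A}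
    (hf : f ∈ S) (hfW : IsSupportedIn W f) {a b : A} (ha : a ∈ W) (hb : b ∈ W) (hab : a ≠ b)
    (hfab : f a = f b) (hg : g ∈ S) (hgW : IsSupportedIn W g) (hfin : (g '' W).Finite)
    {x y : A} (hx : x ∈ g '' W) (hy : y ∈ g '' W) (hxy : x ≠ y) :
    ∃ g' ∈ S, IsSupportedIn W g' ∧ (g' '' W).Finite ∧ (g' '' W).ncard < (g '' W).ncard := by
  set y' := swap x a y
  have hy'a : y' ≠ a := fun h =>
    hxy ((swap x a).injective (h.trans (swap_apply_left x a).symm)).symm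
  set π : A → A := ⇑(swap y' b) ∘ ⇑(swap x a)
  have hπx : π x = a := by
    simp only [π, comp_apply, swap_apply_left, swap_apply_of_ne_of_ne hy'a.symm hab]
  have hπy : π y = b := swap_apply_left y' b
  have hxW : x ∈ W := hgW.1.image_subset hx
  have hπW : IsSupportedIn W π :=
    (isSupportedIn_swap (isSupportedIn_swap hxW ha |>.1 (hgW.1.image_subset hy)) hb).comp
      (isSupportedIn_swap hxW ha)
  have hsub : (f ∘ π ∘ g) '' W ⊆ (f ∘ π) '' (g '' W \ {y}) := by
    rintro _ ⟨w, hw, rfl⟩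
    rcases eq_or_ne (g w) y with hgw | hgw
    · exact ⟨x, ⟨hx, hxy⟩, by simp only [comp_apply, hgw, hπx, hπy, hfab]⟩
    · exact ⟨g w, ⟨mem_image_of_mem g hw, hgw⟩, rfl⟩
  have hfin' : ((f ∘ π) '' (g '' W \ {y})).Finite := hfin.sdiff.image _
  refine ⟨f ∘ π ∘ g, hcomp f hf _ (swap_comp_mem hcomp hFT (swap_comp_mem hcomp hFT hg _ _) _ _),
    hfW.comp (hπW.comp hgW), hfin'.subset hsub, ?_⟩
  calc ((f ∘ π ∘ g) '' W).ncard ≤ ((f ∘ π) '' (g '' W \ {y})).ncard := ncard_le_ncard hsub hfin'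
    _ ≤ (g '' W \ {y}).ncard := ncard_image_le hfin.sdiff
    _ < (g '' W).ncard := ncard_sdiff_singleton_lt_of_mem hy hfin

theorem injective_of_finite_image (hcomp : ∀ f ∈ S, ∀ g ∈ S, f ∘ g ∈ S)
    (hFT : ∀ a b : A, a ≠ b → ⇑(swap a b) ∈ S) (hnsc : ∀ g ∈ S, ¬ ∃ c, SemiConstWith g c)
    {W : Set A} {f : A → A} (hf : f ∈ S) (hfW : IsSupportedIn W f) (hfin : (f '' W).Finite) :
    Injective f := by
  intro a b hfab
  by_contra hab
  have ha := hfW.mem_of_apply_eq_apply hab hfab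
  have hb := hfW.mem_of_apply_eq_apply (Ne.symm hab) hfab.symm
  suffices ∀ n, ∀ g ∈ S, IsSupportedIn W g → (g '' W).Finite → (g '' W).ncard ≠ n from
    this _ f hf hfW hfin rfl
  intro n
  induction n using Nat.strong_induction_on with
  | _ n ih =>
    intro g hg hgW hgfin hn
    rcases (g '' W).subsingleton_or_nontrivial with hsub | ⟨x, hx, y, hy, hxy⟩
    · exact hnsc g hg (exists_semiConstWith_of_subsingleton_image hgW.2 ⟨a, ha, b, hb, hab⟩ hsub)
    · obtain ⟨g', hg', hg'W, hg'fin, hlt⟩ :=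
        exists_ncard_image_lt hcomp hFT hf hfW ha hb hab hfab hg hgW hgfin hx hy hxy
      exact ih _ (hn ▸ hlt) g' hg' hg'W hg'fin rfl

end SwapClosed

theorem IsSupportedIn.iterate_card_factorial_eq_id {W : Set A} [Fintype W] {f : A → A}
    (hf : IsSupportedIn W f) (hinj : InjOn f W) : f^[(Fintype.card W)!] = id := by
  have h := injective_iff_iterate_factorial_card_eq_id.1 (hf.1.restrict_inj.2 hinj)
  funext x
  by_cases hx : x ∈ W
  · simpa [hf.1.coe_iterate_restrict] using congrArg Subtype.val (congrFun h ⟨x, hx⟩)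
  · exact iterate_fixed (hf.2 x hx) _

theorem iterate_succ_mem {S : Set (A → A)} (hcomp : ∀ f ∈ S, ∀ g ∈ S, f ∘ g ∈ S) {f : A → A}
    (hf : f ∈ S) : ∀ k : ℕ, f^[k + 1] ∈ S
  | 0 => hf
  | k + 1 => by
    rw [iterate_succ']
    exact hcomp f hf _ (iterate_succ_mem hcomp hf k)

/-- For `n = m + 1`, the inverse `f^[m]` of `f` may be `id`, which need not lie in `S`;
`f^[2m + 1]` does. -/
theorem exists_inverse_mem_of_iterate_eq_id {S : Set (A → A)}
    (hcomp : ∀ f ∈ S, ∀ g ∈ S, f ∘ g ∈ S) {f : A → A} (hf : f ∈ S) {n : ℕ} (hn : n ≠ 0)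
    (h : f^[n] = id) : ∃ g ∈ S, LeftInverse g f ∧ RightInverse g f := by
  obtain ⟨m, rfl⟩ := Nat.exists_eq_succ_of_ne_zero hn
  have h2 : f^[m + m + 1 + 1] = id := by
    rw [show m + m + 1 + 1 = m.succ + m.succ by omega, iterate_add, h, id_comp]
  refine ⟨f^[m + m + 1], iterate_succ_mem hcomp hf _, fun x => ?_, fun x => ?_⟩
  · rw [← iterate_succ_apply f, h2, id]
  · rw [← iterate_succ_apply' f, h2, id]

end TranspositionalSemigroup

theorem stmt10_general {A : Type*} [DecidableEq A] (S : Set (A → A))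
    (hcomp : ∀ f ∈ S, ∀ g ∈ S, f ∘ g ∈ S)
    (hFT : ∀ a b : A, a ≠ b → ⇑(Equiv.swap a b) ∈ S)
    (hnsc : ∀ g ∈ S, ¬ ∃ c, SemiConstWith g c)
    (f : A → A) (hf : f ∈ S)
    -- `|B(f)| ≤ 2`: among any three nontrivial `~_f`-classes, two coincide
    (hB : ∀ a b c : A, {x | f x = f a}.Nontrivial → {x | f x = f b}.Nontrivial →
      {x | f x = f c}.Nontrivial →
      {x | f x = f a} = {x | f x = f b} ∨ {x | f x = f a} = {x | f x = f c} ∨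
        {x | f x = f b} = {x | f x = f c}) :
    (Function.Bijective f ∧ {x : A | f x ≠ x}.Finite ∧
      ∃ g ∈ S, Function.LeftInverse g f ∧ Function.RightInverse g f) ∨
    {a : A | ¬ ({x : A | f x = f a}.Nontrivial) ∧ f ⁻¹' {a} ≠ {a}}.Infinite := by
  rw [or_iff_not_imp_right, Set.not_infinite]
  intro hT
  set W := {x | f ⁻¹' {x} ≠ {x}}
  have hfW : IsSupportedIn W f := isSupportedIn_setOf_preimage_singleton_ne f
  have hfin : (f '' W).Finite := by
    refine ((hT.image f).union (finite_image_setOf_nontrivial_fiber hB)).subset ?_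
    rw [← image_union]
    exact image_mono fun x hx => (em _).elim Or.inr fun h => Or.inl ⟨h, hx⟩
  have hinj : Injective f := injective_of_finite_image hcomp hFT hnsc hf hfW hfin
  have hWfin : W.Finite :=
    hT.subset fun x hx => ⟨fun ⟨p, hp, q, hq, hpq⟩ => hpq (hinj (hp.trans hq.symm)), hx⟩
  have := hWfin.fintype
  obtain ⟨g, hg, hl, hr⟩ := exists_inverse_mem_of_iterate_eq_id hcomp hf (Nat.factorial_ne_zero _)
    (hfW.iterate_card_factorial_eq_id hinj.injOn)
  exact ⟨⟨hl.injective, hr.surjective⟩, hWfin.subset fun x hx => by_contra (hx ∘ hfW.2 x), g, hg,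
    hl, hr⟩

theorem stmt10 {A : Type*} [DecidableEq A] (S : Set (A → A))
    (hne : S.Nonempty)
    (hcomp : ∀ f ∈ S, ∀ g ∈ S, f ∘ g ∈ S)
    (hFT : ∀ a b : A, a ≠ b → ⇑(Equiv.swap a b) ∈ S)
    (hnsc : ∀ g ∈ S, ¬ ∃ c, SemiConstWith g c)
    (f : A → A) (hf : f ∈ S)
    -- `|B(f)| ≤ 2`: among any three nontrivial `~_f`-classes, two coincide
    (hB : ∀ a b c : A, {x | f x = f a}.Nontrivial → {x | f x = f b}.Nontrivial →
      {x | f x = f c}.Nontrivial →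
      {x | f x = f a} = {x | f x = f b} ∨ {x | f x = f a} = {x | f x = f c} ∨
        {x | f x = f b} = {x | f x = f c}) :
    (Function.Bijective f ∧ {x : A | f x ≠ x}.Finite ∧
      ∃ g ∈ S, Function.LeftInverse g f ∧ Function.RightInverse g f) ∨
    {a : A | ¬ ({x : A | f x = f a}.Nontrivial) ∧ f ⁻¹' {a} ≠ {a}}.Infinite :=
  stmt10_general S hcomp hFT hnsc f hf hB
end

section
/- Let A be a set, f : A → A, and x₁, u₁, x₂, u₂ ∈ A with f(x₁) ≠ f(x₂), u₁ ≠ u₂, and ⟨u₁ u₂⟩ ∘ f ∘ ⟨x₁ x₂⟩ = f. Then either (f⁻¹[{u₁}] = {x₁} and f⁻¹[{u₂}] = {x₂}) or (f⁻¹[{u₁}] = {x₂} and f⁻¹[{u₂}] = {x₁}). -/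
/-! Write `σ = ⟨u₁ u₂⟩` and `τ = ⟨x₁ x₂⟩`, so that `σ (f (τ a)) = f a` for all `a`. At `a = x₂` this
gives `σ (f x₁) = f x₂ ≠ f x₁`, so `σ` moves `f x₁`: hence `f x₁ ∈ {u₁, u₂}` and `f x₂` is the other
one. Any `a ∉ {x₁, x₂}` is fixed by `τ`, so `f a` is fixed by `σ`, i.e. `f a ∉ {u₁, u₂}`. -/

namespace Function

variable {α β : Type*} [DecidableEq α] [DecidableEq β] {f : α → β} {x₁ x₂ : α} {u₁ u₂ : β}

theorem swap_apply_apply_of_comp_swap_eq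
    (h : ⇑(Equiv.swap u₁ u₂) ∘ f ∘ ⇑(Equiv.swap x₁ x₂) = f) :
    Equiv.swap u₁ u₂ (f x₁) = f x₂ := by
  simpa using congrFun h x₂

theorem apply_eq_and_apply_eq_of_comp_swap_eq
    (h : ⇑(Equiv.swap u₁ u₂) ∘ f ∘ ⇑(Equiv.swap x₁ x₂) = f)
    (hx : f x₁ ≠ f x₂) :
    (f x₁ = u₁ ∧ f x₂ = u₂) ∨ (f x₁ = u₂ ∧ f x₂ = u₁) := by
  have hσ := swap_apply_apply_of_comp_swap_eq h
  rcases Equiv.eq_or_eq_of_swap_apply_ne_self (hσ.trans_ne hx.symm) with h₁ | h₁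
  · exact .inl ⟨h₁, by rwa [h₁, Equiv.swap_apply_left, eq_comm] at hσ⟩
  · exact .inr ⟨h₁, by rwa [h₁, Equiv.swap_apply_right, eq_comm] at hσ⟩

theorem preimage_pair_subset_of_comp_swap_eq
    (h : ⇑(Equiv.swap u₁ u₂) ∘ f ∘ ⇑(Equiv.swap x₁ x₂) = f)
    (hu : u₁ ≠ u₂) : f ⁻¹' {u₁, u₂} ⊆ {x₁, x₂} := by
  intro a ha
  by_contra hx
  simp only [Set.mem_insert_iff, Set.mem_singleton_iff, not_or] at hx
  have hfix : Equiv.swap u₁ u₂ (f a) = f a := by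
    simpa [Equiv.swap_apply_of_ne_of_ne hx.1 hx.2] using congrFun h a
  exact Equiv.swap_apply_ne_self_iff.mpr ⟨hu, ha⟩ hfix

end Function

theorem Set.preimage_singleton_eq_singleton_of_subset_pair {α β : Type*} {f : α → β} {a b : α}
    {u : β} (ha : f a = u) (hb : f b ≠ u) (h : f ⁻¹' {u} ⊆ {a, b}) : f ⁻¹' {u} = {a} := by
  refine Set.Subset.antisymm (fun c hc => ?_) (Set.singleton_subset_iff.mpr ha)
  rcases h hc with rfl | rfl
  · rfl
  · exact absurd hc hb

open Function Set in
theorem stmt12 {A : Type*} [DecidableEq A] (f : A → A) (x₁ u₁ x₂ u₂ : A)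
    (hx : f x₁ ≠ f x₂) (hu : u₁ ≠ u₂)
    (h : ⇑(Equiv.swap u₁ u₂) ∘ f ∘ ⇑(Equiv.swap x₁ x₂) = f) :
    (f ⁻¹' {u₁} = {x₁} ∧ f ⁻¹' {u₂} = {x₂}) ∨
      (f ⁻¹' {u₁} = {x₂} ∧ f ⁻¹' {u₂} = {x₁}) := by
  have hsub := preimage_pair_subset_of_comp_swap_eq h hu
  have h₁ : f ⁻¹' {u₁} ⊆ {x₁, x₂} := (preimage_mono (by simp)).trans hsub
  have h₂ : f ⁻¹' {u₂} ⊆ {x₁, x₂} := (preimage_mono (by simp)).trans hsub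
  rcases apply_eq_and_apply_eq_of_comp_swap_eq h hx with ⟨hf₁, hf₂⟩ | ⟨hf₁, hf₂⟩
  · exact .inl ⟨preimage_singleton_eq_singleton_of_subset_pair hf₁ (hf₂ ▸ hu.symm) h₁,
      preimage_singleton_eq_singleton_of_subset_pair hf₂ (hf₁ ▸ hu) (h₂.trans_eq (pair_comm _ _))⟩
  · exact .inr ⟨preimage_singleton_eq_singleton_of_subset_pair hf₂ (hf₁ ▸ hu.symm)
      (h₁.trans_eq (pair_comm _ _)), preimage_singleton_eq_singleton_of_subset_pair hf₁ (hf₂ ▸ hu) h₂⟩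
end

section
/- Let S be a fully-transpositional semigroup on A with no constant function, f ∈ S, a ∈ A, and b = f(a). Suppose a ∈ Fxd-img(f) (i.e., f(b) = b). Then there exists z ∈ A with f(z) ≠ b, and for σ = ⟨b z⟩ we have a ∉ Fxd-img(σ ∘ f). Moreover, for every c ∈ [a]_f with c ≠ b and every z ∉ [a]_f, we have a ∈ Fxd-img(⟨c z⟩ ∘ f). -/
namespace Equiv

variable {A : Type*} [DecidableEq A]

theorem swap_apply_comp_apply_swap_left_ne {f : A → A} {b z : A} (hz : f z ≠ b) :
    swap b z (f (swap b z b)) ≠ swap b z b := by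
  rw [swap_apply_left]
  intro h
  exact hz ((swap b z).injective (h.trans (swap_apply_left b z).symm))

theorem swap_apply_comp_apply_eq_of_apply_eq {f : A → A} {b c z : A} (hfix : f b = b)
    (hcb : c ≠ b) (hzb : z ≠ b) : swap c z (f (swap c z b)) = swap c z b := by
  have hb : swap c z b = b := swap_apply_of_ne_of_ne hcb.symm hzb.symm
  rw [hb, hfix, hb]

end Equiv

theorem stmt16_general {A : Type*} [DecidableEq A] (S : Set (A → A))
    (hnoconst : ∀ g ∈ S, ¬ ∃ c, ∀ x, g x = c)
    (f : A → A) (hf : f ∈ S) (a b : A) (hb : b = f a) (hfix : f b = b) :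
    (∃ z : A, f z ≠ b ∧
        Equiv.swap b z (f (Equiv.swap b z (f a))) ≠ Equiv.swap b z (f a)) ∧
      ∀ c z : A, f c = f a → c ≠ b → f z ≠ f a →
        Equiv.swap c z (f (Equiv.swap c z (f a))) = Equiv.swap c z (f a) := by
  subst hb
  refine ⟨?_, fun c z _ hcb hz => ?_⟩
  · obtain ⟨z, hz⟩ := not_forall.mp (not_exists.mp (hnoconst f hf) (f a))
    exact ⟨z, hz, Equiv.swap_apply_comp_apply_swap_left_ne hz⟩
  · have hzb : z ≠ f a := by
      rintro rfl
      exact hz hfix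
    exact Equiv.swap_apply_comp_apply_eq_of_apply_eq hfix hcb hzb

theorem stmt16 {A : Type*} [DecidableEq A] (S : Set (A → A))
    (hne : S.Nonempty)
    (hcomp : ∀ f ∈ S, ∀ g ∈ S, f ∘ g ∈ S)
    (hFT : ∀ a b : A, a ≠ b → ⇑(Equiv.swap a b) ∈ S)
    (hnoconst : ∀ g ∈ S, ¬ ∃ c, ∀ x, g x = c)
    (f : A → A) (hf : f ∈ S) (a b : A) (hb : b = f a) (hfix : f b = b) :
    (∃ z : A, f z ≠ b ∧
        Equiv.swap b z (f (Equiv.swap b z (f a))) ≠ Equiv.swap b z (f a)) ∧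
      ∀ c z : A, f c = f a → c ≠ b → f z ≠ f a →
        Equiv.swap c z (f (Equiv.swap c z (f a))) = Equiv.swap c z (f a) :=
  stmt16_general S hnoconst f hf a b hb hfix
end

section
/- Let f : A → A, a ∈ A with a ∉ Fxd-img(f) and b = f(a). Then a ∈ Fxd-img(⟨a b⟩ ∘ f), and for every c ∈ A with c ≠ b, a ∉ Fxd-img(⟨a c⟩ ∘ f) (interpreting ⟨a c⟩ as the identity when a = c). -/
theorem Equiv.Perm.apply_comp_apply_ne_of_apply_eq {A : Type*} {σ : Equiv.Perm A} {f : A → A}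
    {a : A} (hσ : σ (f a) = f a) (ha : f (f a) ≠ f a) :
    σ (f (σ (f a))) ≠ σ (f a) := by
  simpa only [hσ] using σ.injective.ne ha

theorem stmt17 {A : Type*} [DecidableEq A] (f : A → A) (a b : A)
    (ha : f (f a) ≠ f a) (hb : b = f a) :
    Equiv.swap a b (f (Equiv.swap a b (f a))) = Equiv.swap a b (f a) ∧
      ∀ c : A, c ≠ b →
        Equiv.swap a c (f (Equiv.swap a c (f a))) ≠ Equiv.swap a c (f a) := by
  subst hb
  have hfa : f a ≠ a := fun h => ha (by rw [h, h])
  refine ⟨by rw [Equiv.swap_apply_right, Equiv.swap_apply_right], fun c hc => ?_⟩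
  -- `f a ≠ a` and `f a ≠ c`, so `⟨a c⟩` fixes `f a`, also when `c = a`.
  exact Equiv.Perm.apply_comp_apply_ne_of_apply_eq
    (Equiv.swap_apply_of_ne_of_ne hfa hc.symm) ha
end
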